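/- For every natural number n and every real number a, the function y(x) = D_n(x, a) satisfies the second-order linear differential equation (x² − 4a)·y''(x) + x·y'(x) − n²·y(x) = 0 for all real x. -/

import Mathlib

/-!
Write `y = ∑ c_k x^(n-2k)`. The Euler part `x² y'' + x y' - n² y` multiplies `x^j` by
`j² - n²`, while `-4a y''` lowers the degree by two. The coefficients satisfy
`((n-2k-2)² - n²) c_(k+1) = 4a (n-2k)(n-2k-1) c_k`, so the operator applied to the `k`-th term is
`G k - G (k+1)` with `G k = ((n-2k)² - n²) c_k x^(n-2k)`; the sum telescopes to
`G 0 - G (n/2+1)`, and both boundary terms vanish (`c_k = 0` once `2k > n`).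
-/

/-- The `n`-th Dickson polynomial of the first kind over `ℝ`, evaluated at `x` with
parameter `a`: `D_0(x,a) = 2` and, for `n ≥ 1`,
`D_n(x,a) = Σ_{k=0}^{⌊n/2⌋} (n/(n-k)) · C(n-k,k) · (-a)^k · x^(n-2k)`. -/
noncomputable def dicksonR (n : ℕ) (x a : ℝ) : ℝ :=
  if n = 0 then 2
  else ∑ k ∈ Finset.range (n / 2 + 1),
    ((n : ℝ) / ((n : ℝ) - (k : ℝ))) * (Nat.choose (n - k) k : ℝ) * (-a) ^ k * x ^ (n - 2 * k)

open Finset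

theorem deriv_sum_mul_pow {𝕜 ι : Type*} [NontriviallyNormedField 𝕜] (s : Finset ι)
    (c : ι → 𝕜) (e : ι → ℕ) :
    deriv (fun t => ∑ i ∈ s, c i * t ^ e i) = fun t => ∑ i ∈ s, c i * e i * t ^ (e i - 1) := by
  funext t
  simpa only [mul_assoc] using
    (HasDerivAt.fun_sum fun i _ => (hasDerivAt_pow (e i) t).const_mul (c i)).deriv

theorem Nat.choose_succ_right_mul_mul_succ (N k : ℕ) :
    N.choose (k + 1) * (k + 1) * (N + 1) = (N + 1).choose k * (N + 1 - k) * (N - k) := by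
  rw [Nat.choose_succ_right_eq, mul_right_comm, Nat.choose_mul_succ_eq, mul_right_comm]

theorem dickson_ode_monomial (n j : ℕ) (a x : ℝ) :
    (x ^ 2 - 4 * a) * (j * (j - 1 : ℕ) * x ^ (j - 1 - 1)) + x * (j * x ^ (j - 1)) - n ^ 2 * x ^ j
      = ((j : ℝ) ^ 2 - n ^ 2) * x ^ j - 4 * a * (j * (j - 1 : ℕ)) * x ^ (j - 1 - 1) := by
  rcases j with _ | _ | j
  · simp
  · simp only [Nat.sub_self, Nat.cast_zero]
    ring
  · simp only [Nat.add_sub_cancel]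
    push_cast
    ring

/-- The coefficient of `x ^ (n - 2 * k)` in `dicksonR n x a` for `n ≠ 0`. -/
noncomputable def dicksonCoeff (n : ℕ) (a : ℝ) (k : ℕ) : ℝ :=
  (n : ℝ) / ((n : ℝ) - (k : ℝ)) * (Nat.choose (n - k) k : ℝ) * (-a) ^ k

theorem dicksonCoeff_eq_zero_of_lt {n k : ℕ} (h : n < 2 * k) (a : ℝ) :
    dicksonCoeff n a k = 0 := by
  simp [dicksonCoeff, Nat.choose_eq_zero_of_lt (show n - k < k by omega)]

theorem dicksonCoeff_recurrence (n k : ℕ) (a : ℝ) :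
    (((n - 2 * (k + 1) : ℕ) : ℝ) ^ 2 - n ^ 2) * dicksonCoeff n a (k + 1)
      = 4 * a * ((n - 2 * k : ℕ) * (n - 2 * k - 1 : ℕ)) * dicksonCoeff n a k := by
  by_cases hk : 2 * k + 2 ≤ n
  · obtain ⟨m, rfl⟩ := Nat.exists_eq_add_of_le hk
    have key := Nat.choose_succ_right_mul_mul_succ (k + m + 1) k
    rw [show k + m + 1 + 1 - k = m + 2 by omega, show k + m + 1 - k = m + 1 by omega] at key
    have key' : ((k + m + 1).choose (k + 1) : ℝ) * (k + 1) * (k + m + 2)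
        = (k + m + 2).choose k * (m + 2) * (m + 1) := by exact_mod_cast key
    unfold dicksonCoeff
    rw [show 2 * k + 2 + m - 2 * (k + 1) = m by omega, show 2 * k + 2 + m - 2 * k = m + 2 by omega,
      show m + 2 - 1 = m + 1 by omega, show 2 * k + 2 + m - (k + 1) = k + m + 1 by omega,
      show 2 * k + 2 + m - k = k + m + 2 by omega,
      show ((2 * k + 2 + m : ℕ) : ℝ) - ((k + 1 : ℕ) : ℝ) = k + m + 1 by push_cast; ring,
      show ((2 * k + 2 + m : ℕ) : ℝ) - (k : ℝ) = k + m + 2 by push_cast; ring]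
    push_cast
    field_simp
    linear_combination 4 * a * (k + m + 1) * (-a) ^ k * key'
  · have hchoose : (n - (k + 1)).choose (k + 1) = 0 := Nat.choose_eq_zero_of_lt (by omega)
    simp [dicksonCoeff, hchoose, show n - 2 * k - 1 = 0 by omega]

theorem dickson_ode_term (n k : ℕ) (a x : ℝ) :
    (x ^ 2 - 4 * a) * (dicksonCoeff n a k * (n - 2 * k : ℕ) * (n - 2 * k - 1 : ℕ)
        * x ^ (n - 2 * k - 1 - 1))
      + x * (dicksonCoeff n a k * (n - 2 * k : ℕ) * x ^ (n - 2 * k - 1))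
      - n ^ 2 * (dicksonCoeff n a k * x ^ (n - 2 * k))
      = (((n - 2 * k : ℕ) : ℝ) ^ 2 - n ^ 2) * dicksonCoeff n a k * x ^ (n - 2 * k)
        - (((n - 2 * (k + 1) : ℕ) : ℝ) ^ 2 - n ^ 2) * dicksonCoeff n a (k + 1)
          * x ^ (n - 2 * (k + 1)) := by
  rw [dicksonCoeff_recurrence, show n - 2 * (k + 1) = n - 2 * k - 1 - 1 by omega]
  linear_combination dicksonCoeff n a k * dickson_ode_monomial n (n - 2 * k) a x

/-- `y(x) = D_n(x,a)` satisfies `(x² − 4a)·y'' + x·y' − n²·y = 0`. -/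
theorem dickson_ode (n : ℕ) (a x : ℝ) :
    (x ^ 2 - 4 * a) * deriv (deriv (fun t : ℝ => dicksonR n t a)) x
      + x * deriv (fun t : ℝ => dicksonR n t a) x
      - (n : ℝ) ^ 2 * dicksonR n x a = 0 := by
  rcases Nat.eq_zero_or_pos n with rfl | hn
  · simp [dicksonR]
  have hy : (fun t => dicksonR n t a)
      = fun t => ∑ k ∈ range (n / 2 + 1), dicksonCoeff n a k * t ^ (n - 2 * k) := by
    funext t
    simp [dicksonR, dicksonCoeff, hn.ne']
  rw [congrFun hy x, hy, deriv_sum_mul_pow, deriv_sum_mul_pow]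
  simp only [mul_sum, ← sum_add_distrib, ← sum_sub_distrib]
  rw [sum_congr rfl fun k _ => dickson_ode_term n k a x, sum_range_sub',
    dicksonCoeff_eq_zero_of_lt (k := n / 2 + 1) (by omega)]
  simp
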